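/- arXiv:1403.6085 — 7 statements merged into one kernel-verified Lean document; each statement's English description precedes it below -/
import Mathlib

section
/- Let ε > 0 and M ≥ 0 be real numbers, and let x, f, t : ℕ → ℝ be sequences such that 0 ≤ x(0) ≤ M and, for every n: f(n) ≤ (M − x(n))/ε, 0 ≤ t(n) ≤ ε, x(n+1) = x(n) + f(n)·t(n), and x(n) + f(n)·s ≥ 0 for every s ∈ [0, t(n)]. Then 0 ≤ x(n) ≤ M for every n ∈ ℕ. -/
theorem mul_le_of_le_div_of_le {α : Type*} [Field α] [LinearOrder α] [IsStrictOrderedRing α]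
    {c ε f t : α} (hε : 0 < ε) (hc : 0 ≤ c) (hf : f ≤ c / ε) (ht₀ : 0 ≤ t) (htε : t ≤ ε) :
    f * t ≤ c := by
  rcases le_or_gt f 0 with hf_nonpos | hf_pos
  · exact (mul_nonpos_of_nonpos_of_nonneg hf_nonpos ht₀).trans hc
  · calc f * t ≤ f * ε := mul_le_mul_of_nonneg_left htε hf_pos.le
      _ ≤ c := (le_div_iff₀ hε).1 hf

theorem watertank_loop_invariant_general (ε M : ℝ) (hε : ε > 0)
    (x f t : ℕ → ℝ)
    (hx0 : 0 ≤ x 0 ∧ x 0 ≤ M)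
    (hf : ∀ n, f n ≤ (M - x n) / ε)
    (ht : ∀ n, 0 ≤ t n ∧ t n ≤ ε)
    (hstep : ∀ n, x (n + 1) = x n + f n * t n)
    (hdom : ∀ n, ∀ s ∈ Set.Icc (0 : ℝ) (t n), x n + f n * s ≥ 0) :
    ∀ n, 0 ≤ x n ∧ x n ≤ M := by
  intro n
  induction n with
  | zero => exact hx0
  | succ n ih =>
    have hflow : f n * t n ≤ M - x n :=
      mul_le_of_le_div_of_le hε (sub_nonneg.2 ih.2) (hf n) (ht n).1 (ht n).2
    rw [hstep n]
    exact ⟨hdom n (t n) ⟨(ht n).1, le_rfl⟩, by linarith⟩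

theorem watertank_loop_invariant (ε M : ℝ) (hε : ε > 0) (hM : M ≥ 0)
    (x f t : ℕ → ℝ)
    (hx0 : 0 ≤ x 0 ∧ x 0 ≤ M)
    (hf : ∀ n, f n ≤ (M - x n) / ε)
    (ht : ∀ n, 0 ≤ t n ∧ t n ≤ ε)
    (hstep : ∀ n, x (n + 1) = x n + f n * t n)
    (hdom : ∀ n, ∀ s ∈ Set.Icc (0 : ℝ) (t n), x n + f n * s ≥ 0) :
    ∀ n, 0 ≤ x n ∧ x n ≤ M :=
  watertank_loop_invariant_general ε M hε x f t hx0 hf ht hstep hdom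
end

section
/- Let B > 0, A ≥ 0, ε > 0 and v ≥ 0 be real numbers. Suppose a and t satisfy −B ≤ a ≤ A, 0 ≤ t ≤ ε and v + a·t ≥ 0. If real numbers xr, xo satisfy xo − xr > v²/(2·B) + (A/B + 1)·(A·ε²/2 + ε·v), then xo − (xr + v·t + a·t²/2) > (v + a·t)²/(2·B). -/
/-!
The point at which the robot would come to rest under full braking, `x + v² / (2B)`, advances
during a cycle with acceleration `a` by exactly `(a / B + 1) · (a t² / 2 + t v)`. Both factors are
nonnegative and monotone in `a` and `t`, so this advance is at most the compensation term, which
the safety condition reserves in front of the obstacle.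
-/

lemma stopping_point_advance {B : ℝ} (hB : B ≠ 0) (v a t : ℝ) :
    v * t + a * t ^ 2 / 2 + (v + a * t) ^ 2 / (2 * B) =
      v ^ 2 / (2 * B) + (a / B + 1) * (a * t ^ 2 / 2 + t * v) := by
  field_simp
  ring

lemma displacement_nonneg {v a t : ℝ} (hv : 0 ≤ v) (ht : 0 ≤ t) (hvt : 0 ≤ v + a * t) :
    0 ≤ a * t ^ 2 / 2 + t * v := by
  have : a * t ^ 2 / 2 + t * v = t * (v + (v + a * t)) / 2 := by ring
  rw [this]
  positivity

lemma displacement_le {v a t A ε : ℝ} (hv : 0 ≤ v) (hA : 0 ≤ A) (ha : a ≤ A)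
    (ht1 : 0 ≤ t) (ht2 : t ≤ ε) : a * t ^ 2 / 2 + t * v ≤ A * ε ^ 2 / 2 + ε * v := by
  have hsq : a * t ^ 2 ≤ A * ε ^ 2 :=
    calc a * t ^ 2 ≤ A * t ^ 2 := by gcongr
      _ ≤ A * ε ^ 2 := by gcongr
  have hlin : t * v ≤ ε * v := by gcongr
  linarith

lemma stopping_point_advance_le {B A ε v a t : ℝ} (hB : 0 < B) (hA : 0 ≤ A) (hv : 0 ≤ v)
    (ha1 : -B ≤ a) (ha2 : a ≤ A) (ht1 : 0 ≤ t) (ht2 : t ≤ ε) (hvt : 0 ≤ v + a * t) :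
    (a / B + 1) * (a * t ^ 2 / 2 + t * v) ≤ (A / B + 1) * (A * ε ^ 2 / 2 + ε * v) := by
  have hfactor : 0 ≤ a / B + 1 := by
    have : -1 ≤ a / B := by rw [le_div_iff₀ hB]; linarith
    linarith
  have hfactor_le : a / B + 1 ≤ A / B + 1 := by gcongr
  exact mul_le_mul hfactor_le (displacement_le hv hA ha2 ht1 ht2)
    (displacement_nonneg hv ht1 hvt) (hfactor.trans hfactor_le)

theorem acceleration_preserves_braking_invariant_general
    (B A ε v a t xr xo : ℝ)
    (hB : B > 0) (hA : A ≥ 0) (hv : v ≥ 0)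
    (ha1 : -B ≤ a) (ha2 : a ≤ A) (ht1 : 0 ≤ t) (ht2 : t ≤ ε)
    (hvt : v + a * t ≥ 0)
    (hsafe : xo - xr > v ^ 2 / (2 * B) + (A / B + 1) * (A * ε ^ 2 / 2 + ε * v)) :
    xo - (xr + v * t + a * t ^ 2 / 2) > (v + a * t) ^ 2 / (2 * B) := by
  have hadvance := stopping_point_advance hB.ne' v a t
  have hbound := stopping_point_advance_le hB hA hv ha1 ha2 ht1 ht2 hvt
  linarith

theorem acceleration_preserves_braking_invariant
    (B A ε v a t xr xo : ℝ)
    (hB : B > 0) (hA : A ≥ 0) (hε : ε > 0) (hv : v ≥ 0)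
    (ha1 : -B ≤ a) (ha2 : a ≤ A) (ht1 : 0 ≤ t) (ht2 : t ≤ ε)
    (hvt : v + a * t ≥ 0)
    (hsafe : xo - xr > v ^ 2 / (2 * B) + (A / B + 1) * (A * ε ^ 2 / 2 + ε * v)) :
    xo - (xr + v * t + a * t ^ 2 / 2) > (v + a * t) ^ 2 / (2 * B) :=
  acceleration_preserves_braking_invariant_general B A ε v a t xr xo hB hA hv ha1 ha2 ht1 ht2 hvt
    hsafe
end

section
/- Let B > 0, V ≥ 0, v ≥ 0 and t ≥ 0 be real numbers with v − B·t ≥ 0, let or be a real number with or² = 1, and let δ be a real number with |δ| ≤ V·t. If real numbers xr, xo satisfy |xr − xo| ≥ v²/(2·B) + v·V/B, then |(xr + or·(v·t − B·t²/2)) − (xo + δ)| ≥ (v − B·t)²/(2·B) + (v − B·t)·V/B. -/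
/-!
While braking for time `t` the robot covers `v t - B t² / 2` and the obstacle at most `V t`, so
the distance between them shrinks by at most the sum of the two. The stopping margin
`v² / (2B) + v V / B` shrinks by exactly this sum when the speed drops from `v` to `v - B t`.
-/

noncomputable def stoppingMargin (B V v : ℝ) : ℝ := v ^ 2 / (2 * B) + v * V / B

theorem stoppingMargin_eq_sub_add (B V v t : ℝ) (hB : B ≠ 0) :
    stoppingMargin B V v =
      stoppingMargin B V (v - B * t) + (v * t - B * t ^ 2 / 2) + V * t := by
  unfold stoppingMargin
  field_simp
  ring

theorem braking_displacement_nonneg {K : Type*} [Field K] [LinearOrder K] [IsStrictOrderedRing K]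
    {B v t : K} (hB : 0 ≤ B) (ht : 0 ≤ t) (hvt : 0 ≤ v - B * t) :
    0 ≤ v * t - B * t ^ 2 / 2 := by
  nlinarith [mul_nonneg ht hvt, mul_nonneg hB (sq_nonneg t)]

theorem abs_sub_le_abs_add_sub_add {α : Type*} [AddCommGroup α] [LinearOrder α]
    [IsOrderedAddMonoid α] (x y u w : α) :
    |x - y| ≤ |x + u - (y + w)| + |u| + |w| := by
  calc |x - y| = |(x + u - (y + w)) + -u + w| := by congr 1; abel
    _ ≤ |x + u - (y + w)| + |-u| + |w| := abs_add_three _ _ _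
    _ = |x + u - (y + w)| + |u| + |w| := by rw [abs_neg]

theorem braking_preserves_stoppable_general
    (B V v t orr δ xr xo : ℝ)
    (hB : B > 0) (ht : t ≥ 0)
    (hvt : v - B * t ≥ 0) (hor : orr ^ 2 = 1) (hδ : |δ| ≤ V * t)
    (hinv : |xr - xo| ≥ v ^ 2 / (2 * B) + v * V / B) :
    |(xr + orr * (v * t - B * t ^ 2 / 2)) - (xo + δ)| ≥
      (v - B * t) ^ 2 / (2 * B) + (v - B * t) * V / B := by
  change stoppingMargin B V v ≤ |xr - xo| at hinv
  change stoppingMargin B V (v - B * t) ≤ _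
  have horr : |orr| = 1 := by
    simpa using (sq_eq_sq_iff_abs_eq_abs orr 1).mp (by rw [hor, one_pow])
  have hdisp : |orr * (v * t - B * t ^ 2 / 2)| = v * t - B * t ^ 2 / 2 := by
    rw [abs_mul, horr, one_mul, abs_of_nonneg (braking_displacement_nonneg hB.le ht hvt)]
  have hmargin := stoppingMargin_eq_sub_add B V v t hB.ne'
  have htri := abs_sub_le_abs_add_sub_add xr xo (orr * (v * t - B * t ^ 2 / 2)) δ
  linarith

theorem braking_preserves_stoppable
    (B V v t orr δ xr xo : ℝ)
    (hB : B > 0) (hV : V ≥ 0) (hv : v ≥ 0) (ht : t ≥ 0)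
    (hvt : v - B * t ≥ 0) (hor : orr ^ 2 = 1) (hδ : |δ| ≤ V * t)
    (hinv : |xr - xo| ≥ v ^ 2 / (2 * B) + v * V / B) :
    |(xr + orr * (v * t - B * t ^ 2 / 2)) - (xo + δ)| ≥
      (v - B * t) ^ 2 / (2 * B) + (v - B * t) * V / B :=
  braking_preserves_stoppable_general B V v t orr δ xr xo hB ht hvt hor hδ hinv
end

section
/- Let B > 0, A ≥ 0, V ≥ 0, ε > 0 and v ≥ 0 be real numbers, let a and t satisfy −B ≤ a ≤ A, 0 ≤ t ≤ ε and v + a·t ≥ 0, let or be a real number with or² = 1, and let δ be a real number with |δ| ≤ V·t. If real numbers xr, xo satisfy |xr − xo| ≥ v²/(2·B) + (A/B + 1)·(A·ε²/2 + ε·v) + V·(ε + (v + A·ε)/B), then |(xr + or·(v·t + a·t²/2)) − (xo + δ)| ≥ (v + a·t)²/(2·B) + (v + a·t)·V/B. -/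
/-!
With `d = v t + a t² / 2` the distance the robot covers, `|or · d| = d` since `or = ±1`, so the
triangle inequality costs at most `d + V t ≤ (v ε + A ε² / 2) + V ε` of the initial gap. The
assumed gap splits exactly as that loss plus the margin `w² / (2B) + w V / B` at the largest
reachable speed `w = v + A ε`, and this margin is monotone in `w`, so it dominates the margin
at the actual new speed `v + a t ≤ v + A ε`.
-/

/-- Braking distance at speed `w` plus the obstacle's travel during the braking time `w / B`. -/
noncomputable def stopMargin (B V w : ℝ) : ℝ := w ^ 2 / (2 * B) + w * V / B

noncomputable def travel (v a t : ℝ) : ℝ := v * t + a * t ^ 2 / 2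

lemma stopMargin_le_stopMargin {B V w w' : ℝ} (hB : 0 ≤ B) (hV : 0 ≤ V) (hw : 0 ≤ w)
    (hww' : w ≤ w') : stopMargin B V w ≤ stopMargin B V w' := by
  unfold stopMargin
  gcongr

lemma travel_nonneg {v a t : ℝ} (hv : 0 ≤ v) (ht : 0 ≤ t) (hvt : 0 ≤ v + a * t) :
    0 ≤ travel v a t := by
  have : travel v a t = t * v / 2 + t * (v + a * t) / 2 := by unfold travel; ring
  rw [this]
  positivity

lemma travel_le_travel {v a t A ε : ℝ} (hv : 0 ≤ v) (hA : 0 ≤ A) (ha : a ≤ A) (ht : 0 ≤ t)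
    (htε : t ≤ ε) : travel v a t ≤ travel v A ε := by
  unfold travel
  have : a * t ^ 2 ≤ A * ε ^ 2 :=
    calc a * t ^ 2 ≤ A * t ^ 2 := by gcongr
      _ ≤ A * ε ^ 2 := by gcongr
  nlinarith

lemma safeDistance_eq {B : ℝ} (hB : B ≠ 0) (A V ε v : ℝ) :
    v ^ 2 / (2 * B) + (A / B + 1) * (A * ε ^ 2 / 2 + ε * v) + V * (ε + (v + A * ε) / B) =
      stopMargin B V (v + A * ε) + travel v A ε + V * ε := by
  unfold stopMargin travel
  field_simp
  ring

lemma abs_sub_add_ge (x y p q : ℝ) : |x - y| - |p| - |q| ≤ |(x + p) - (y + q)| := by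
  have h := abs_sub_abs_le_abs_sub (x - y) (q - p)
  rw [show x - y - (q - p) = x + p - (y + q) by ring] at h
  linarith [abs_sub q p]

theorem acceleration_preserves_stoppable_general
    (B A V ε v a t orr δ xr xo : ℝ)
    (hB : B > 0) (hA : A ≥ 0) (hV : V ≥ 0) (hv : v ≥ 0)
    (ha2 : a ≤ A) (ht1 : 0 ≤ t) (ht2 : t ≤ ε)
    (hvt : v + a * t ≥ 0) (hor : orr ^ 2 = 1) (hδ : |δ| ≤ V * t)
    (hsafe : |xr - xo| ≥ v ^ 2 / (2 * B) + (A / B + 1) * (A * ε ^ 2 / 2 + ε * v) +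
      V * (ε + (v + A * ε) / B)) :
    |(xr + orr * (v * t + a * t ^ 2 / 2)) - (xo + δ)| ≥
      (v + a * t) ^ 2 / (2 * B) + (v + a * t) * V / B := by
  have horr : |orr| = 1 := by
    simpa using (sq_eq_sq_iff_abs_eq_abs orr 1).mp (by rw [hor, one_pow])
  have hmove : |orr * travel v a t| = travel v a t := by
    rw [abs_mul, horr, one_mul, abs_of_nonneg (travel_nonneg hv ht1 hvt)]
  have hspeed : v + a * t ≤ v + A * ε := by
    have : a * t ≤ A * ε := (mul_le_mul_of_nonneg_right ha2 ht1).trans (by gcongr)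
    linarith
  have hmargin := stopMargin_le_stopMargin hB.le hV hvt hspeed
  have htravel := travel_le_travel hv hA ha2 ht1 ht2
  have hVt : V * t ≤ V * ε := by gcongr
  have hgap := abs_sub_add_ge xr xo (orr * travel v a t) δ
  rw [safeDistance_eq hB.ne'] at hsafe
  show |xr + orr * travel v a t - (xo + δ)| ≥ stopMargin B V (v + a * t)
  linarith

theorem acceleration_preserves_stoppable
    (B A V ε v a t orr δ xr xo : ℝ)
    (hB : B > 0) (hA : A ≥ 0) (hV : V ≥ 0) (hε : ε > 0) (hv : v ≥ 0)
    (ha1 : -B ≤ a) (ha2 : a ≤ A) (ht1 : 0 ≤ t) (ht2 : t ≤ ε)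
    (hvt : v + a * t ≥ 0) (hor : orr ^ 2 = 1) (hδ : |δ| ≤ V * t)
    (hsafe : |xr - xo| ≥ v ^ 2 / (2 * B) + (A / B + 1) * (A * ε ^ 2 / 2 + ε * v) +
      V * (ε + (v + A * ε) / B)) :
    |(xr + orr * (v * t + a * t ^ 2 / 2)) - (xo + δ)| ≥
      (v + a * t) ^ 2 / (2 * B) + (v + a * t) * V / B :=
  acceleration_preserves_stoppable_general B A V ε v a t orr δ xr xo hB hA hV hv ha2 ht1 ht2 hvt hor
    hδ hsafe
end

section
/- Let B > 0 and v ≥ 0 be real numbers, let o be a real number with o² = 1, and let t ≥ 0 satisfy v − B·t ≥ 0. Set x' = x + o·(v·t − B·t²/2) and v' = v − B·t. If real numbers xlb, x, xub satisfy xlb + ((1 − o)/2)·v²/(2·B) < x < xub − ((1 + o)/2)·v²/(2·B), then xlb + ((1 − o)/2)·v'²/(2·B) < x' < xub − ((1 + o)/2)·v'²/(2·B). -/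
/-!
Braking for time `t` covers the distance `d = v t - B t² / 2 ≥ 0`, and the stopping distance
shrinks by exactly that amount: `(v - B t)² / (2B) = v² / (2B) - d`. So the margin
`(1 ∓ o) / 2 · v² / (2B)` drops by `(1 ∓ o) / 2 · d` while the robot moves by `o d`, and the
slack on either side grows by `(1 ± o) / 2 · d`, which is nonnegative because `|o| ≤ 1`.
-/

lemma braking_distance_nonneg {B v t : ℝ} (hB : 0 ≤ B) (ht : 0 ≤ t) (hvt : 0 ≤ v - B * t) :
    0 ≤ v * t - B * t ^ 2 / 2 := by
  nlinarith [mul_nonneg ht hvt, mul_nonneg hB (mul_nonneg ht ht)]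

lemma stopping_distance_after_braking {B : ℝ} (hB : B ≠ 0) (v t : ℝ) :
    (v - B * t) ^ 2 / (2 * B) = v ^ 2 / (2 * B) - (v * t - B * t ^ 2 / 2) := by
  field_simp
  ring

lemma lower_margin_preserved {o d m l x : ℝ} (ho : -1 ≤ o) (hd : 0 ≤ d)
    (h : l + (1 - o) / 2 * m < x) : l + (1 - o) / 2 * (m - d) < x + o * d := by
  nlinarith [mul_nonneg (neg_le_iff_add_nonneg.mp ho) hd]

lemma upper_margin_preserved {o d m u x : ℝ} (ho : o ≤ 1) (hd : 0 ≤ d)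
    (h : x < u - (1 + o) / 2 * m) : x + o * d < u - (1 + o) / 2 * (m - d) := by
  nlinarith [mul_nonneg (sub_nonneg.mpr ho) hd]

theorem braking_preserves_bounds_general
    (B v o t xlb x xub : ℝ)
    (hB : B > 0) (ho : o ^ 2 = 1) (ht : t ≥ 0)
    (hvt : v - B * t ≥ 0)
    (hlo : xlb + ((1 - o) / 2) * v ^ 2 / (2 * B) < x)
    (hhi : x < xub - ((1 + o) / 2) * v ^ 2 / (2 * B)) :
    xlb + ((1 - o) / 2) * (v - B * t) ^ 2 / (2 * B) < x + o * (v * t - B * t ^ 2 / 2) ∧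
      x + o * (v * t - B * t ^ 2 / 2) < xub - ((1 + o) / 2) * (v - B * t) ^ 2 / (2 * B) := by
  have hd := braking_distance_nonneg hB.le ht hvt
  obtain ⟨ho_ge, ho_le⟩ := abs_le.mp (sq_le_one_iff_abs_le_one o |>.mp ho.le)
  simp only [mul_div_assoc ((1 - o) / 2), mul_div_assoc ((1 + o) / 2)] at hlo hhi ⊢
  rw [stopping_distance_after_braking hB.ne']
  exact ⟨lower_margin_preserved ho_ge hd hlo, upper_margin_preserved ho_le hd hhi⟩

theorem braking_preserves_bounds
    (B v o t xlb x xub : ℝ)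
    (hB : B > 0) (hv : v ≥ 0) (ho : o ^ 2 = 1) (ht : t ≥ 0)
    (hvt : v - B * t ≥ 0)
    (hlo : xlb + ((1 - o) / 2) * v ^ 2 / (2 * B) < x)
    (hhi : x < xub - ((1 + o) / 2) * v ^ 2 / (2 * B)) :
    xlb + ((1 - o) / 2) * (v - B * t) ^ 2 / (2 * B) < x + o * (v * t - B * t ^ 2 / 2) ∧
      x + o * (v * t - B * t ^ 2 / 2) < xub - ((1 + o) / 2) * (v - B * t) ^ 2 / (2 * B) :=
  braking_preserves_bounds_general B v o t xlb x xub hB ho ht hvt hlo hhi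
end

section
/- Let r be a nonzero real number and let x, y, v, dx, dy : ℝ → ℝ be functions such that for every t ∈ ℝ, x has derivative v(t)·dx(t), y has derivative v(t)·dy(t), dx has derivative −(v(t)·dy(t))/r, and dy has derivative (v(t)·dx(t))/r at t. Then x(t) − r·dy(t) = x(0) − r·dy(0) and y(t) + r·dx(t) = y(0) + r·dx(0) for all t; consequently, if dx(0)² + dy(0)² = 1, then (x(t) − (x(0) − r·dy(0)))² + (y(t) − (y(0) + r·dx(0)))² = r² for all t, i.e., the robot moves on the circle of radius |r| about the fixed center (x(0) − r·dy(0), y(0) + r·dx(0)). -/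
/-!
The velocity of `(x, y)` is `r` times the derivative of `(dy, -dx)`, so the point
`(x, y) - r • (dy, -dx)` does not move: it is the centre of the circle. The heading `(dx, dy)`
rotates with angular speed `v / r`, so its length is conserved, and the distance from the centre
to the robot is `|r|` times that length.
-/

theorem sub_smul_eq_of_hasDerivAt {𝕜 E : Type*} [RCLike 𝕜] [NormedAddCommGroup E]
    [NormedSpace 𝕜 E] {f g f' g' : 𝕜 → E} (c : 𝕜)
    (hf : ∀ t, HasDerivAt f (f' t) t) (hg : ∀ t, HasDerivAt g (g' t) t)
    (hfg : ∀ t, f' t = c • g' t) (t s : 𝕜) :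
    f t - c • g t = f s - c • g s := by
  have hderiv : ∀ t, HasDerivAt (f - c • g) 0 t := fun t => by
    simpa [hfg t] using (hf t).sub ((hg t).const_smul c)
  exact is_const_of_deriv_eq_zero (fun t => (hderiv t).differentiableAt)
    (fun t => (hderiv t).deriv) t s

theorem sq_add_sq_eq_of_hasDerivAt_rotation {u w ω : ℝ → ℝ}
    (hu : ∀ t, HasDerivAt u (-(ω t * w t)) t) (hw : ∀ t, HasDerivAt w (ω t * u t) t)
    (t s : ℝ) : u t ^ 2 + w t ^ 2 = u s ^ 2 + w s ^ 2 := by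
  have hderiv : ∀ t, HasDerivAt (u ^ 2 + w ^ 2) 0 t := fun t =>
    (((hu t).pow 2).add ((hw t).pow 2)).congr_deriv (by norm_num; ring)
  exact is_const_of_deriv_eq_zero (fun t => (hderiv t).differentiableAt)
    (fun t => (hderiv t).deriv) t s

theorem circular_motion_fixed_center
    (r : ℝ) (hr : r ≠ 0) (x y v dx dy : ℝ → ℝ)
    (hx : ∀ t : ℝ, HasDerivAt x (v t * dx t) t)
    (hy : ∀ t : ℝ, HasDerivAt y (v t * dy t) t)
    (hdx : ∀ t : ℝ, HasDerivAt dx (-(v t * dy t) / r) t)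
    (hdy : ∀ t : ℝ, HasDerivAt dy ((v t * dx t) / r) t) :
    (∀ t : ℝ, x t - r * dy t = x 0 - r * dy 0 ∧ y t + r * dx t = y 0 + r * dx 0) ∧
      (dx 0 ^ 2 + dy 0 ^ 2 = 1 →
        ∀ t : ℝ, (x t - (x 0 - r * dy 0)) ^ 2 + (y t - (y 0 + r * dx 0)) ^ 2 = r ^ 2) := by
  have center_x (t : ℝ) : x t - r * dy t = x 0 - r * dy 0 :=
    sub_smul_eq_of_hasDerivAt r hx hdy (fun t => by rw [smul_eq_mul]; field_simp) t 0
  have center_y (t : ℝ) : y t + r * dx t = y 0 + r * dx 0 := by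
    simpa using
      sub_smul_eq_of_hasDerivAt (-r) hy hdx (fun t => by rw [smul_eq_mul]; field_simp) t 0
  have speed (t : ℝ) : dx t ^ 2 + dy t ^ 2 = dx 0 ^ 2 + dy 0 ^ 2 :=
    sq_add_sq_eq_of_hasDerivAt_rotation (ω := fun t => v t / r)
      (fun t => (hdx t).congr_deriv (by ring)) (fun t => (hdy t).congr_deriv (by ring)) t 0
  refine ⟨fun t => ⟨center_x t, center_y t⟩, fun hunit t => ?_⟩
  calc (x t - (x 0 - r * dy 0)) ^ 2 + (y t - (y 0 + r * dx 0)) ^ 2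
      = r ^ 2 * (dx t ^ 2 + dy t ^ 2) := by rw [← center_x t, ← center_y t]; ring
    _ = r ^ 2 := by rw [speed t, hunit, mul_one]
end

section
/- Let B > 0 and v0 ≥ 0 be real numbers, let p : ℝ → ℝ × ℝ be a function that is differentiable on [0, v0/B] with ‖p'(t)‖ ≤ v0 − B·t (Euclidean norm of the derivative) for every t ∈ [0, v0/B], and let po ∈ ℝ × ℝ be a point whose sup-norm distance to p(0) satisfies max(|p(0).1 − po.1|, |p(0).2 − po.2|) > v0²/(2·B). Then the Euclidean distance from p(t) to po is strictly positive for every t ∈ [0, v0/B]. -/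
/-!
Measured in the sup-norm of `ℝ × ℝ`, which is dominated by the Euclidean norm, the speed of the
robot is at most `v0 - B t`. Comparing with the braking curve `t ↦ v0 t - B t² / 2` bounds its
displacement by `v0² / (2 B)`, so the triangle inequality keeps its sup-norm distance to the
obstacle positive, and hence its Euclidean distance as well.
-/

open Set

theorem Prod.norm_le_sqrt_sq_add_sq (x : ℝ × ℝ) : ‖x‖ ≤ √(x.1 ^ 2 + x.2 ^ 2) :=
  max_le (Real.abs_le_sqrt (le_add_of_nonneg_right (sq_nonneg _)))
    (Real.abs_le_sqrt (le_add_of_nonneg_left (sq_nonneg _)))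

theorem mul_sub_half_mul_sq_le_sq_div {B : ℝ} (hB : 0 < B) (v t : ℝ) :
    v * t - B / 2 * t ^ 2 ≤ v ^ 2 / (2 * B) := by
  rw [le_div_iff₀ (by positivity)]
  nlinarith [sq_nonneg (v - B * t)]

theorem norm_sub_le_of_norm_deriv_le_braking {E : Type*} [NormedAddCommGroup E]
    [NormedSpace ℝ E] {f f' : ℝ → E} {v B T : ℝ}
    (hf : ∀ t ∈ Icc 0 T, HasDerivWithinAt f (f' t) (Icc 0 T) t)
    (hf' : ∀ t ∈ Ico 0 T, ‖f' t‖ ≤ v - B * t) :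
    ∀ t ∈ Icc 0 T, ‖f t - f 0‖ ≤ v * t - B / 2 * t ^ 2 := by
  have hcont : ContinuousOn (fun s => f s - f 0) (Icc 0 T) := fun t ht =>
    (hf t ht).continuousWithinAt.sub continuousWithinAt_const
  have hderiv : ∀ t ∈ Ico 0 T, HasDerivWithinAt (fun s => f s - f 0) (f' t) (Ici t) t :=
    fun t ht => ((hf t (Ico_subset_Icc_self ht)).sub_const (f 0)).mono_of_mem_nhdsWithin
      (Icc_mem_nhdsGE_of_mem ht)
  have hbrake : ∀ t, HasDerivAt (fun s => v * s - B / 2 * s ^ 2) (v - B * t) t := fun t =>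
    (((hasDerivAt_id' t).const_mul v).sub ((hasDerivAt_pow 2 t).const_mul (B / 2))).congr_deriv
      (by ring)
  exact image_norm_le_of_norm_deriv_right_le_deriv_boundary hcont hderiv (by simp) hbrake hf'

theorem planar_braking_avoids_obstacle_general
    (B v0 : ℝ) (hB : B > 0)
    (p p' : ℝ → ℝ × ℝ)
    (hderiv : ∀ t ∈ Set.Icc (0 : ℝ) (v0 / B),
      HasDerivWithinAt p (p' t) (Set.Icc (0 : ℝ) (v0 / B)) t)
    (hspeed : ∀ t ∈ Set.Icc (0 : ℝ) (v0 / B),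
      Real.sqrt ((p' t).1 ^ 2 + (p' t).2 ^ 2) ≤ v0 - B * t)
    (po : ℝ × ℝ)
    (hdist : max |(p 0).1 - po.1| |(p 0).2 - po.2| > v0 ^ 2 / (2 * B)) :
    ∀ t ∈ Set.Icc (0 : ℝ) (v0 / B),
      Real.sqrt (((p t).1 - po.1) ^ 2 + ((p t).2 - po.2) ^ 2) > 0 := by
  intro t ht
  have hmove : ‖p t - p 0‖ ≤ v0 ^ 2 / (2 * B) :=
    (norm_sub_le_of_norm_deriv_le_braking hderiv
      (fun s hs => (Prod.norm_le_sqrt_sq_add_sq _).trans (hspeed s (Ico_subset_Icc_self hs)))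
      t ht).trans (mul_sub_half_mul_sq_le_sq_div hB v0 t)
  have hstart : v0 ^ 2 / (2 * B) < ‖p 0 - po‖ := hdist
  have hnow : 0 < ‖p t - po‖ := by
    have htri := norm_sub_le_norm_sub_add_norm_sub (p 0) (p t) po
    rw [norm_sub_rev (p 0) (p t)] at htri
    linarith
  exact hnow.trans_le (Prod.norm_le_sqrt_sq_add_sq (p t - po))

theorem planar_braking_avoids_obstacle
    (B v0 : ℝ) (hB : B > 0) (hv0 : v0 ≥ 0)
    (p p' : ℝ → ℝ × ℝ)
    (hderiv : ∀ t ∈ Set.Icc (0 : ℝ) (v0 / B),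
      HasDerivWithinAt p (p' t) (Set.Icc (0 : ℝ) (v0 / B)) t)
    (hspeed : ∀ t ∈ Set.Icc (0 : ℝ) (v0 / B),
      Real.sqrt ((p' t).1 ^ 2 + (p' t).2 ^ 2) ≤ v0 - B * t)
    (po : ℝ × ℝ)
    (hdist : max |(p 0).1 - po.1| |(p 0).2 - po.2| > v0 ^ 2 / (2 * B)) :
    ∀ t ∈ Set.Icc (0 : ℝ) (v0 / B),
      Real.sqrt (((p t).1 - po.1) ^ 2 + ((p t).2 - po.2) ^ 2) > 0 :=
  planar_braking_avoids_obstacle_general B v0 hB p p' hderiv hspeed po hdist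
end
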